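/- arXiv:2211.01701 — 4 statements merged into one kernel-verified Lean document; each statement's English description precedes it below -/
import Mathlib

section
/- If a vertex v in an undirected graph G is contained in fewer than ℓ triangles of G, then v is not contained in any vertex-ℓ-triangle 2-club of G; hence deleting v does not change the set of vertex-ℓ-triangle 2-clubs. -/
/-!
Triangles of `G[S]` are triangles of `G`, so every vertex of a vertex-ℓ-triangle 2-club of `G`
lies in at least `ℓ` triangles of `G`; hence no such club contains `v`. On a set avoiding `v`
the graphs `G` and `G - v` induce the same subgraph, so they have the same clubs there, and
`v` itself lies in no club of `G - v` because it is isolated there.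
-/

open Finset

variable {V : Type*}

/-- `S` is a 2-club: any two vertices of `S` are joined by a walk of length at most 2
whose vertices all lie in `S` (i.e. `G[S]` has diameter at most 2). -/
def IsTwoClub (G : SimpleGraph V) (S : Finset V) : Prop :=
  ∀ u ∈ S, ∀ w ∈ S, ∃ p : G.Walk u w, p.length ≤ 2 ∧ ∀ x ∈ p.support, x ∈ S

/-- The number of triangles of `G` containing `v`. -/
def triCount [Fintype V] [DecidableEq V] (G : SimpleGraph V) [DecidableRel G.Adj] (v : V) : ℕ :=
  ((G.cliqueFinset 3).filter (fun t => v ∈ t)).card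

/-- The number of triangles of `G[S]` containing `v`, i.e. triangles of `G` inside `S`. -/
def triCountIn [Fintype V] [DecidableEq V] (G : SimpleGraph V) [DecidableRel G.Adj]
    (v : V) (S : Finset V) : ℕ :=
  ((G.cliqueFinset 3).filter (fun t => v ∈ t ∧ t ⊆ S)).card

/-- `S` is a vertex-ℓ-triangle 2-club: `G[S]` has diameter at most 2 and every vertex
of `S` lies in at least `ℓ` triangles of `G[S]`. -/
def IsVertexTriangleTwoClub [Fintype V] [DecidableEq V] (G : SimpleGraph V)
    [DecidableRel G.Adj] (ℓ : ℕ) (S : Finset V) : Prop :=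
  IsTwoClub G S ∧ ∀ v ∈ S, ℓ ≤ triCountIn G v S

/-- The graph obtained from `G` by deleting the vertex `v` (making it isolated). -/
def deleteVertex (G : SimpleGraph V) (v : V) : SimpleGraph V where
  Adj a b := G.Adj a b ∧ a ≠ v ∧ b ≠ v
  symm := ⟨fun a b ⟨h, ha, hb⟩ => ⟨h.symm, hb, ha⟩⟩
  loopless := ⟨fun a ⟨h, _, _⟩ => G.loopless.irrefl a h⟩

instance (G : SimpleGraph V) [DecidableRel G.Adj] [DecidableEq V] (v : V) :
    DecidableRel (deleteVertex G v).Adj :=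
  fun a b => inferInstanceAs (Decidable (G.Adj a b ∧ a ≠ v ∧ b ≠ v))

lemma IsTwoClub.of_adj_imp {G H : SimpleGraph V} {S : Finset V} (hS : IsTwoClub G S)
    (hGH : ∀ a ∈ S, ∀ b ∈ S, G.Adj a b → H.Adj a b) : IsTwoClub H S := by
  intro u hu w hw
  obtain ⟨p, hp, hpS⟩ := hS u hu w hw
  refine ⟨p.transfer H fun e he => ?_, by rwa [SimpleGraph.Walk.length_transfer], ?_⟩
  · induction e with
    | h a b =>
      exact hGH a (hpS a (p.fst_mem_support_of_mem_edges he))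
        b (hpS b (p.snd_mem_support_of_mem_edges he)) (p.adj_of_mem_edges he)
  · simpa only [SimpleGraph.Walk.support_transfer] using hpS

lemma isNClique_congr_of_subset {G H : SimpleGraph V} {S t : Finset V} {n : ℕ}
    (hGH : ∀ a ∈ S, ∀ b ∈ S, G.Adj a b ↔ H.Adj a b) (htS : t ⊆ S) :
    G.IsNClique n t ↔ H.IsNClique n t := by
  simp only [SimpleGraph.isNClique_iff, SimpleGraph.IsClique]
  refine and_congr_left' ⟨fun h a ha b hb hab => ?_, fun h a ha b hb hab => ?_⟩
  · exact (hGH a (htS ha) b (htS hb)).1 (h ha hb hab)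
  · exact (hGH a (htS ha) b (htS hb)).2 (h ha hb hab)

lemma triCountIn_congr [Fintype V] [DecidableEq V] (G H : SimpleGraph V) [DecidableRel G.Adj]
    [DecidableRel H.Adj] {S : Finset V} (hGH : ∀ a ∈ S, ∀ b ∈ S, G.Adj a b ↔ H.Adj a b)
    (u : V) : triCountIn G u S = triCountIn H u S := by
  unfold triCountIn
  congr 1
  ext t
  simp only [mem_filter, SimpleGraph.mem_cliqueFinset_iff]
  exact ⟨fun ⟨ht, hut, htS⟩ => ⟨(isNClique_congr_of_subset hGH htS).1 ht, hut, htS⟩,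
    fun ⟨ht, hut, htS⟩ => ⟨(isNClique_congr_of_subset hGH htS).2 ht, hut, htS⟩⟩

lemma triCountIn_le_triCount [Fintype V] [DecidableEq V] (G : SimpleGraph V)
    [DecidableRel G.Adj] (u : V) (S : Finset V) : triCountIn G u S ≤ triCount G u :=
  card_le_card <| monotone_filter_right _ fun _ _ h => h.1

lemma isVertexTriangleTwoClub_congr [Fintype V] [DecidableEq V] (G H : SimpleGraph V)
    [DecidableRel G.Adj] [DecidableRel H.Adj] {S : Finset V} (ℓ : ℕ)
    (hGH : ∀ a ∈ S, ∀ b ∈ S, G.Adj a b ↔ H.Adj a b) :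
    IsVertexTriangleTwoClub G ℓ S ↔ IsVertexTriangleTwoClub H ℓ S := by
  simp only [IsVertexTriangleTwoClub, triCountIn_congr G H hGH]
  exact and_congr_left fun _ =>
    ⟨(·.of_adj_imp fun a ha b hb => (hGH a ha b hb).1),
      (·.of_adj_imp fun a ha b hb => (hGH a ha b hb).2)⟩

lemma IsVertexTriangleTwoClub.notMem_of_triCount_lt [Fintype V] [DecidableEq V]
    {G : SimpleGraph V} [DecidableRel G.Adj] {ℓ : ℕ} {S : Finset V}
    (hS : IsVertexTriangleTwoClub G ℓ S) {v : V} (hv : triCount G v < ℓ) : v ∉ S :=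
  fun hvS => (hv.trans_le ((hS.2 v hvS).trans (triCountIn_le_triCount G v S))).false

lemma deleteVertex_adj_iff_of_notMem (G : SimpleGraph V) {v : V} {S : Finset V} (hv : v ∉ S) :
    ∀ a ∈ S, ∀ b ∈ S, (deleteVertex G v).Adj a b ↔ G.Adj a b :=
  fun _ ha _ hb =>
    ⟨(·.1), fun h => ⟨h, ne_of_mem_of_not_mem ha hv, ne_of_mem_of_not_mem hb hv⟩⟩

lemma triCount_deleteVertex_self [Fintype V] [DecidableEq V] (G : SimpleGraph V)
    [DecidableRel G.Adj] (v : V) : triCount (deleteVertex G v) v = 0 := by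
  refine card_eq_zero.2 <| filter_eq_empty_iff.2 fun t ht hvt => ?_
  rw [SimpleGraph.mem_cliqueFinset_iff] at ht
  obtain ⟨a, ha, hav⟩ := exists_mem_ne (by rw [ht.card_eq]; norm_num) v
  exact (ht.isClique hvt ha hav.symm).2.1 rfl

theorem stmt_0 [Fintype V] [DecidableEq V] (G : SimpleGraph V) [DecidableRel G.Adj]
    (ℓ : ℕ) (v : V) (h : triCount G v < ℓ) :
    (∀ S : Finset V, IsVertexTriangleTwoClub G ℓ S → v ∉ S) ∧
    (∀ S : Finset V, IsVertexTriangleTwoClub G ℓ S ↔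
      IsVertexTriangleTwoClub (deleteVertex G v) ℓ S) := by
  have hG (S : Finset V) (hS : IsVertexTriangleTwoClub G ℓ S) : v ∉ S :=
    hS.notMem_of_triCount_lt h
  refine ⟨hG, fun S => ⟨fun hS => ?_, fun hS => ?_⟩⟩
  · exact (isVertexTriangleTwoClub_congr _ _ ℓ (deleteVertex_adj_iff_of_notMem G (hG S hS))).2 hS
  · have hv : v ∉ S := hS.notMem_of_triCount_lt <| by
      rw [triCount_deleteVertex_self]
      exact Nat.zero_lt_of_lt h
    exact (isVertexTriangleTwoClub_congr _ _ ℓ (deleteVertex_adj_iff_of_notMem G hv)).1 hS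
end

section
/- If an edge e of a graph G is contained in fewer than ℓ triangles of G, then for every edge-ℓ-triangle 2-club S of G with witnessing spanning subgraph Ĝ = (S, Ê), the edge e is not in Ê; consequently S is still an edge-ℓ-triangle 2-club of G − e. -/
open Finset

variable {V : Type*}

/-- The number of triangles of `H` containing the edge `ab`, i.e. the number of
common neighbors of `a` and `b` in `H`. -/
noncomputable def edgeTriCount (H : SimpleGraph V) (a b : V) : ℕ :=
  {x | H.Adj a x ∧ H.Adj b x}.ncard

/-- `H` witnesses that `S` is an edge-ℓ-triangle 2-club of `G`: `H` is a spanning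
subgraph of `G[S]` of diameter at most 2 in which every edge lies in at least
`ℓ` triangles. -/
def IsWitness (G : SimpleGraph V) (ℓ : ℕ) (S : Finset V) (H : SimpleGraph V) : Prop :=
  H ≤ G ∧ (∀ a b, H.Adj a b → a ∈ S ∧ b ∈ S) ∧
    (∀ u ∈ S, ∀ w ∈ S, ∃ p : H.Walk u w, p.length ≤ 2) ∧
    (∀ a b, H.Adj a b → ℓ ≤ edgeTriCount H a b)

/-- `S` is an edge-ℓ-triangle 2-club of `G`. -/
def IsEdgeTriangleTwoClub (G : SimpleGraph V) (ℓ : ℕ) (S : Finset V) : Prop :=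
  ∃ H : SimpleGraph V, IsWitness G ℓ S H

lemma edgeTriCount_mono [Finite V] {H G : SimpleGraph V} (hle : H ≤ G) (a b : V) :
    edgeTriCount H a b ≤ edgeTriCount G a b :=
  Set.ncard_le_ncard (fun _ hx ↦ ⟨hle hx.1, hle hx.2⟩) (Set.toFinite _)

namespace IsWitness

variable {G H : SimpleGraph V} {ℓ : ℕ} {S : Finset V}

lemma not_adj_of_edgeTriCount_lt [Finite V] (hw : IsWitness G ℓ S H) {u w : V}
    (hlow : edgeTriCount G u w < ℓ) : ¬ H.Adj u w := fun huw ↦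
  (hw.2.2.2 u w huw).trans (edgeTriCount_mono hw.1 u w) |>.not_gt hlow

lemma deleteEdges (hw : IsWitness G ℓ S H) {s : Set (Sym2 V)} (hs : Disjoint H.edgeSet s) :
    IsWitness (G.deleteEdges s) ℓ S H :=
  ⟨(SimpleGraph.deleteEdges_eq_self.mpr hs).ge.trans (SimpleGraph.deleteEdges_mono hw.1), hw.2⟩

end IsWitness

theorem stmt_2_general [Fintype V] (G : SimpleGraph V) (ℓ : ℕ) (u w : V)
    (hlow : edgeTriCount G u w < ℓ) :
    (∀ (S : Finset V) (H : SimpleGraph V), IsWitness G ℓ S H → ¬ H.Adj u w) ∧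
    (∀ S : Finset V, IsEdgeTriangleTwoClub G ℓ S →
      IsEdgeTriangleTwoClub (G.deleteEdges {s(u, w)}) ℓ S) :=
  ⟨fun _ _ hw ↦ hw.not_adj_of_edgeTriCount_lt hlow, fun _ ⟨H, hw⟩ ↦
    ⟨H, hw.deleteEdges (Set.disjoint_singleton_right.mpr (hw.not_adj_of_edgeTriCount_lt hlow))⟩⟩

theorem stmt_2 [Fintype V] (G : SimpleGraph V) (ℓ : ℕ) (u w : V)
    (hadj : G.Adj u w) (hlow : edgeTriCount G u w < ℓ) :
    (∀ (S : Finset V) (H : SimpleGraph V), IsWitness G ℓ S H → ¬ H.Adj u w) ∧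
    (∀ S : Finset V, IsEdgeTriangleTwoClub G ℓ S →
      IsEdgeTriangleTwoClub (G.deleteEdges {s(u, w)}) ℓ S) :=
  stmt_2_general G ℓ u w hlow
end

section
/- Let G be a graph, let v be a vertex, let u ≠ v be another vertex, let x_v be the number of triangles of G containing v, and let x_{uv} be the number of triangles of G containing both u and v. If x_v − x_{uv} < ℓ, then every vertex-ℓ-triangle 2-club of G that contains v also contains u. -/
open Finset

variable {V : Type*}

/-- The number of triangles of `G` containing both `u` and `v`. -/
def triCountPair [Fintype V] [DecidableEq V] (G : SimpleGraph V) [DecidableRel G.Adj]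
    (u v : V) : ℕ :=
  ((G.cliqueFinset 3).filter (fun t => u ∈ t ∧ v ∈ t)).card

theorem triCountIn_add_triCountPair_le [Fintype V] [DecidableEq V] (G : SimpleGraph V)
    [DecidableRel G.Adj] {u v : V} {S : Finset V} (hu : u ∉ S) :
    triCountIn G v S + triCountPair G u v ≤ triCount G v := by
  rw [triCountIn, triCountPair, triCount, ← card_union_of_disjoint]
  · refine card_le_card fun t ht => ?_
    simp only [mem_union, mem_filter] at ht ⊢
    tauto
  · exact disjoint_filter.2 fun t _ hS hu' => hu (hS.2 hu'.1)

theorem stmt_9_general [Fintype V] [DecidableEq V] (G : SimpleGraph V) [DecidableRel G.Adj]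
    (ℓ : ℕ) (u v : V)
    (h : triCount G v - triCountPair G u v < ℓ) :
    ∀ S : Finset V, IsVertexTriangleTwoClub G ℓ S → v ∈ S → u ∈ S := by
  intro S ⟨_, hℓ⟩ hvS
  by_contra huS
  have hlow : ℓ ≤ triCountIn G v S := hℓ v hvS
  have hup := triCountIn_add_triCountPair_le G (v := v) huS
  omega

theorem stmt_9 [Fintype V] [DecidableEq V] (G : SimpleGraph V) [DecidableRel G.Adj]
    (ℓ : ℕ) (u v : V) (hne : u ≠ v)
    (h : triCount G v - triCountPair G u v < ℓ) :
    ∀ S : Finset V, IsVertexTriangleTwoClub G ℓ S → v ∈ S → u ∈ S :=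
  stmt_9_general G ℓ u v h
end

section
/- Let G be a graph and v a vertex. Consider the induced subgraph G_v = G[N[v]] of the closed neighborhood of v, and let S_v be the vertex set obtained from G_v by iteratively deleting vertices contained in fewer than ℓ triangles until no such vertex remains, assuming v survives this process. Then S_v is a vertex-ℓ-triangle 2-club, and moreover S_v is a maximum-cardinality vertex-ℓ-triangle 2-club among those contained in N[v]. -/
open Finset

variable {V : Type*}

/-- One step of the deletion procedure: delete a vertex lying in fewer than `ℓ`
triangles of the current induced graph. -/
inductive DelStep [Fintype V] [DecidableEq V] (G : SimpleGraph V) [DecidableRel G.Adj]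
    (ℓ : ℕ) : Finset V → Finset V → Prop
  | step (T : Finset V) (w : V) (hw : w ∈ T) (hbad : triCountIn G w T < ℓ) :
      DelStep G ℓ T (T.erase w)

/-!
Every vertex of `N[v]` is adjacent to `v`, so any subset of `N[v]` containing `v` is a 2-club,
with all paths running through `v`. Triangle counts only grow with the vertex set, so a vertex of
a set `S ⊆ N[v]` in which every vertex lies in at least `ℓ` triangles is never deleted while
`S` is still present; hence `S ⊆ S_v`.
-/

open SimpleGraph

section TwoClub

variable {G : SimpleGraph V} {S : Finset V} {v : V}

lemma exists_short_walk_to_center (hv : v ∈ S) (hadj : ∀ u ∈ S, u ≠ v → G.Adj v u)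
    {u : V} (hu : u ∈ S) :
    ∃ p : G.Walk u v, p.length ≤ 1 ∧ ∀ x ∈ p.support, x ∈ S := by
  by_cases huv : u = v
  · subst huv
    exact ⟨.nil, by simp, by simpa using hu⟩
  · refine ⟨(hadj u hu huv).symm.toWalk, by simp, ?_⟩
    intro x hx
    simp only [Adj.toWalk, Walk.support_cons,
      Walk.support_nil, List.mem_cons, List.not_mem_nil, or_false] at hx
    rcases hx with rfl | rfl <;> assumption

lemma isTwoClub_of_forall_adj (hv : v ∈ S) (hadj : ∀ u ∈ S, u ≠ v → G.Adj v u) :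
    IsTwoClub G S := by
  intro u hu w hw
  obtain ⟨p, hp, hpS⟩ := exists_short_walk_to_center hv hadj hu
  obtain ⟨q, hq, hqS⟩ := exists_short_walk_to_center hv hadj hw
  refine ⟨p.append q.reverse, by rw [Walk.length_append, Walk.length_reverse]; omega,
    fun x hx => ?_⟩
  rcases (Walk.mem_support_append_iff _ _).mp hx with hx | hx
  · exact hpS x hx
  · exact hqS x (by simpa using hx)

end TwoClub

section Deletion

variable [Fintype V] [DecidableEq V] {G : SimpleGraph V} [DecidableRel G.Adj] {ℓ : ℕ}

lemma triCountIn_mono (w : V) {S T : Finset V} (h : S ⊆ T) :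
    triCountIn G w S ≤ triCountIn G w T :=
  card_le_card (monotone_filter_right _ fun _ _ ht => ⟨ht.1, ht.2.trans h⟩)

namespace DelStep

lemma reflTransGen_subset {A B : Finset V} (h : Relation.ReflTransGen (DelStep G ℓ) A B) :
    B ⊆ A := by
  induction h with
  | refl => exact Subset.rfl
  | tail _ step ih =>
    cases step with
    | step w _ _ => exact (erase_subset _ _).trans ih

lemma subset_of_reflTransGen {A B S : Finset V} (h : Relation.ReflTransGen (DelStep G ℓ) A B)
    (hS : ∀ w ∈ S, ℓ ≤ triCountIn G w S) (hSA : S ⊆ A) : S ⊆ B := by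
  induction h with
  | refl => exact hSA
  | tail _ step ih =>
    cases step with
    | step w _ hbad =>
      intro x hx
      refine mem_erase.mpr ⟨?_, ih hx⟩
      rintro rfl
      exact (hbad.trans_le (hS x hx)).not_ge (triCountIn_mono x ih)

end DelStep

end Deletion

/-- If the deletion procedure, started on the closed neighborhood `N[v]`, terminates in a
set `Sv` still containing `v` in which every vertex lies in at least `ℓ` triangles, then
`Sv` is a vertex-ℓ-triangle 2-club of maximum cardinality among those contained in `N[v]`. -/
theorem stmt_13 [Fintype V] [DecidableEq V] (G : SimpleGraph V) [DecidableRel G.Adj]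
    (ℓ : ℕ) (v : V) (Sv : Finset V)
    (hreach : Relation.ReflTransGen (DelStep G ℓ) (insert v (G.neighborFinset v)) Sv)
    (hv : v ∈ Sv)
    (hterm : ∀ w ∈ Sv, ℓ ≤ triCountIn G w Sv) :
    IsVertexTriangleTwoClub G ℓ Sv ∧
    ∀ S : Finset V, IsVertexTriangleTwoClub G ℓ S →
      S ⊆ insert v (G.neighborFinset v) → S.card ≤ Sv.card := by
  have hadj : ∀ u ∈ Sv, u ≠ v → G.Adj v u := fun u hu huv => by
    simpa [huv] using DelStep.reflTransGen_subset hreach hu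
  exact ⟨⟨isTwoClub_of_forall_adj hv hadj, hterm⟩, fun S hS hSN =>
    card_le_card (DelStep.subset_of_reflTransGen hreach hS.2 hSN)⟩
end
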